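/- There exists k_c in the interval (1, 1.1) such that the factor i₄(k) = 9 c(k)²·(((k c(k))')² − 1) + (c(k)² − c(2k)²)·(3 + 15 c(k)² + 6 k c(k) c'(k) − k² c'(k)²), with c(k) = sqrt(tanh(k)/k), vanishes: i₄(k_c) = 0. -/

import Mathlib

noncomputable def cww (k : ℝ) : ℝ := Real.sqrt (Real.tanh k / k)

noncomputable def i4 (k : ℝ) : ℝ :=
  9 * cww k ^ 2 * ((deriv (fun k => k * cww k) k) ^ 2 - 1) +
    (cww k ^ 2 - cww (2 * k) ^ 2) *
      (3 + 15 * cww k ^ 2 + 6 * k * cww k * deriv cww k - k ^ 2 * (deriv cww k) ^ 2)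

/-!
The factor `c(k)²` equals `t / k` with `t = tanh k`, its derivative is a rational function of `k`
and `t`, and `tanh 2k = 2t / (1 + t²)`; so `4 k² (1 + t²) i₄(k)` is a polynomial `Q(k, t)`. For
`k ≥ 1` we have `3/4 < t < 1` (because `e² > 7`), and on that range `Q(1, t) > 0 > Q(1.1, t)`.
The intermediate value theorem applied to `k ↦ Q(k, tanh k)` on `[1, 1.1]` gives the root.
-/

namespace Real

theorem hasDerivAt_tanh (x : ℝ) : HasDerivAt tanh (1 - tanh x ^ 2) x := by
  have hcosh := (cosh_pos x).ne'
  have h := (hasDerivAt_sinh x).fun_div (hasDerivAt_cosh x) hcosh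
  rw [← funext tanh_eq_sinh_div_cosh] at h
  refine h.congr_deriv ?_
  rw [tanh_eq_sinh_div_cosh]
  field_simp

@[fun_prop]
theorem continuous_tanh : Continuous tanh :=
  continuous_iff_continuousAt.2 fun x => (hasDerivAt_tanh x).continuousAt

theorem tanh_pos {x : ℝ} (hx : 0 < x) : 0 < tanh x := by
  rw [tanh_eq_sinh_div_cosh]
  exact div_pos (sinh_pos_iff.2 hx) (cosh_pos x)

theorem tanh_two_mul (x : ℝ) : tanh (2 * x) = 2 * tanh x / (1 + tanh x ^ 2) := by
  have hcosh := (cosh_pos x).ne'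
  rw [tanh_eq_sinh_div_cosh, tanh_eq_sinh_div_cosh, sinh_two_mul, cosh_two_mul]
  field_simp

theorem three_quarters_lt_tanh {x : ℝ} (hx : 1 ≤ x) : 3 / 4 < tanh x := by
  have h7 : 7 < exp x ^ 2 := calc
    (7 : ℝ) < 2.7 ^ 2 := by norm_num
    _ < exp 1 ^ 2 := by gcongr; linarith [exp_one_gt_d9]
    _ ≤ exp x ^ 2 := by gcongr
  rw [tanh_eq, exp_neg, lt_div_iff₀ (by positivity)]
  field_simp
  linarith

end Real

open Real Set

theorem cww_sq {k : ℝ} (hk : 0 < k) : cww k ^ 2 = tanh k / k :=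
  sq_sqrt (div_pos (tanh_pos hk) hk).le

theorem cww_pos {k : ℝ} (hk : 0 < k) : 0 < cww k :=
  sqrt_pos.2 (div_pos (tanh_pos hk) hk)

theorem hasDerivAt_cww {k : ℝ} (hk : 0 < k) :
    HasDerivAt cww (((1 - tanh k ^ 2) * k - tanh k) / k ^ 2 / (2 * cww k)) k := by
  have h := ((hasDerivAt_tanh k).fun_div (hasDerivAt_id' k) hk.ne').sqrt
    (div_pos (tanh_pos hk) hk).ne'
  rw [mul_one] at h
  exact h

/-- `D / k²` is the derivative of `c(k)² = t / k`, where `t` stands for `tanh k`. -/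
noncomputable def i4Numerator (k t : ℝ) : ℝ :=
  let D := (1 - t ^ 2) * k - t
  (1 + t ^ 2) * (36 * t ^ 2 + 36 * t * D + 9 * D ^ 2 - 36 * k * t) +
    t ^ 2 * (12 * k * t + 60 * t ^ 2 + 12 * t * D - D ^ 2)

theorem i4_eq {k : ℝ} (hk : 0 < k) :
    4 * k ^ 2 * (1 + tanh k ^ 2) * i4 k = i4Numerator k (tanh k) := by
  have hc := (cww_pos hk).ne'
  have ht : tanh k = k * cww k ^ 2 := by rw [cww_sq hk]; field_simp
  have hd := (hasDerivAt_cww hk).deriv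
  have hkc : deriv (fun y => y * cww y) k = cww k + k * deriv cww k := by
    simpa [hd] using ((hasDerivAt_id' k).fun_mul (hasDerivAt_cww hk)).deriv
  rw [i4, hkc, hd, cww_sq (by linarith : 0 < 2 * k), tanh_two_mul, i4Numerator, ht]
  field_simp
  ring

theorem i4Numerator_one_pos {t : ℝ} (h1 : 3 / 4 < t) (h2 : t < 1) : 0 < i4Numerator 1 t := by
  simp only [i4Numerator]
  nlinarith [mul_pos (sub_pos.2 h1) (sub_pos.2 h2)]

theorem i4Numerator_eleven_tenths_neg {t : ℝ} (h1 : 3 / 4 < t) (h2 : t < 1) :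
    i4Numerator 1.1 t < 0 := by
  have h := mul_pos (sub_pos.2 h1) (sub_pos.2 h2)
  have ht : 0 < t := by linarith
  simp only [i4Numerator]
  nlinarith [mul_pos h ht, mul_pos h (pow_pos ht 2), mul_pos h (pow_pos ht 3)]

theorem continuous_i4Numerator_tanh : Continuous fun k => i4Numerator k (tanh k) := by
  unfold i4Numerator
  fun_prop

theorem i4_has_root : ∃ kc : ℝ, 1 < kc ∧ kc < 1.1 ∧ i4 kc = 0 := by
  have hsign : (0 : ℝ) ∈ Ioo (i4Numerator 1.1 (tanh 1.1)) (i4Numerator 1 (tanh 1)) :=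
    ⟨i4Numerator_eleven_tenths_neg (three_quarters_lt_tanh (by norm_num)) (tanh_lt_one _),
      i4Numerator_one_pos (three_quarters_lt_tanh le_rfl) (tanh_lt_one _)⟩
  obtain ⟨kc, ⟨hkc1, hkc2⟩, hroot⟩ :=
    intermediate_value_Ioo' (by norm_num) continuous_i4Numerator_tanh.continuousOn hsign
  refine ⟨kc, hkc1, hkc2, ?_⟩
  have hkc : 0 < kc := by linarith
  have hfactor : 4 * kc ^ 2 * (1 + tanh kc ^ 2) ≠ 0 := by positivity
  simpa [hroot, hfactor] using i4_eq hkc
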